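/- Let R be a subdirect product of A × B, let α ≺ β be congruences of A and γ ≺ δ congruences of B, and suppose the prime intervals (α,β) and (γ,δ) cannot be separated from each other in R (no unary polynomial f of R has f(β) ⊄ α and f(δ) ⊆ γ, and none has f(δ) ⊄ γ and f(β) ⊆ α). Then R is ζ(α,β)ζ(γ,δ)-aligned: for any (a,c), (b,d) ∈ R, (a,b) ∈ ζ(α,β) if and only if (c,d) ∈ ζ(γ,δ), where ζ denotes the quasi-centralizer. -/
import Mathlib


/-- Terms over a signature with operation symbols `ι` of arities `ar`,
in `k` variables. -/
inductive SigTerm (ι : Type*) (ar : ι → ℕ) (k : ℕ) : Type _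
  | var : Fin k → SigTerm ι ar k
  | app (s : ι) (args : Fin (ar s) → SigTerm ι ar k) : SigTerm ι ar k

/-- Evaluation of a term in an algebra with carrier `B` and interpretation `op`. -/
def SigTerm.eval {ι : Type*} {ar : ι → ℕ} {k : ℕ} {B : Type*}
    (op : ∀ s : ι, (Fin (ar s) → B) → B) : SigTerm ι ar k → (Fin k → B) → B
  | .var i, x => x i
  | .app s args, x => op s fun j => (args j).eval op x

/-- `p` maps `β` into `α`: the image of every `β`-related pair is `α`-related
(written `p(β) ⊆ α` in the paper). -/
def MapsInto {B : Type*} (β α : B → B → Prop) (p : B → B) : Prop :=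
  ∀ u v : B, β u v → α (p u) (p v)

/-- `θ` is a congruence of the algebra `(B, op)`: an equivalence relation
preserved by all operations. -/
def IsCongr {ι : Type*} {ar : ι → ℕ} {B : Type*}
    (op : ∀ s : ι, (Fin (ar s) → B) → B) (θ : B → B → Prop) : Prop :=
  Equivalence θ ∧ ∀ (s : ι) (x y : Fin (ar s) → B),
    (∀ j, θ (x j) (y j)) → θ (op s x) (op s y)

/-- `(α, β)` is a prime interval in the congruence lattice of `(B, op)`:
`α < β` are congruences with no congruence strictly between them. -/
def PrimeInterval {ι : Type*} {ar : ι → ℕ} {B : Type*}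
    (op : ∀ s : ι, (Fin (ar s) → B) → B) (α β : B → B → Prop) : Prop :=
  IsCongr op α ∧ IsCongr op β ∧ (∀ x y, α x y → β x y) ∧ (∃ x y, β x y ∧ ¬ α x y) ∧
    ∀ γ : B → B → Prop, IsCongr op γ → (∀ x y, α x y → γ x y) → (∀ x y, γ x y → β x y) →
      (∀ x y, γ x y → α x y) ∨ (∀ x y, β x y → γ x y)

section
variable {ι : Type*} {ar : ι → ℕ} {A B : Type*}

/-- The quasi-centralizer `ζ(α, β)` of congruences `α ≤ β` of the algebra
`(C, op)`: `(a, b) ∈ ζ(α, β)` iff for every term operation `f(x, y₁, …, yₖ)`,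
every coordinate `i`, and all constant tuples differing only in coordinate `i`
with values `a` resp. `b` there, the polynomial `f(x, ·)` maps `β` into `α` for
one tuple iff it does for the other. -/
def QuasiCent {C : Type*} (op : ∀ s : ι, (Fin (ar s) → C) → C)
    (α β : C → C → Prop) (a b : C) : Prop :=
  ∀ (k : ℕ) (tm : SigTerm ι ar (k + 1)) (i : Fin k) (av bv : Fin k → C),
    av i = a → bv i = b → (∀ j : Fin k, j ≠ i → av j = bv j) →
    (MapsInto β α (fun x => tm.eval op (Fin.cons x av)) ↔
      MapsInto β α (fun x => tm.eval op (Fin.cons x bv)))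

/-- Lemma `delta-alignment`: let `R ≤ A × B` be a subdirect product,
`α ≺ β ∈ Con(A)`, `γ ≺ δ ∈ Con(B)`, and suppose the two prime intervals cannot
be separated from each other (no unary polynomial of `R` witnesses separation in
either direction). Then `R` is `ζ(α,β)ζ(γ,δ)`-aligned: for all
`(a, c), (b, d) ∈ R`, `(a, b) ∈ ζ(α, β)` iff `(c, d) ∈ ζ(γ, δ)`. -/
theorem centralizer_alignment
    (opA : ∀ s : ι, (Fin (ar s) → A) → A) (opB : ∀ s : ι, (Fin (ar s) → B) → B)
    (R : Set (A × B))
    (hRsub : ∀ (s : ι) (t : Fin (ar s) → A × B), (∀ j, t j ∈ R) →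
      (opA s fun j => (t j).1, opB s fun j => (t j).2) ∈ R)
    (hRsd₁ : ∀ x : A, ∃ y : B, (x, y) ∈ R) (hRsd₂ : ∀ y : B, ∃ x : A, (x, y) ∈ R)
    (α β : A → A → Prop) (γ δ : B → B → Prop)
    (hab : PrimeInterval opA α β) (hgd : PrimeInterval opB γ δ)
    (hsep₁ : ¬ ∃ (k : ℕ) (tm : SigTerm ι ar (k + 1)) (r : Fin k → A × B),
      (∀ l, r l ∈ R) ∧
        ¬ MapsInto β α (fun x => tm.eval opA (Fin.cons x fun l => (r l).1)) ∧
          MapsInto δ γ (fun y => tm.eval opB (Fin.cons y fun l => (r l).2)))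
    (hsep₂ : ¬ ∃ (k : ℕ) (tm : SigTerm ι ar (k + 1)) (r : Fin k → A × B),
      (∀ l, r l ∈ R) ∧
        ¬ MapsInto δ γ (fun y => tm.eval opB (Fin.cons y fun l => (r l).2)) ∧
          MapsInto β α (fun x => tm.eval opA (Fin.cons x fun l => (r l).1))) :
    ∀ a b : A, ∀ c d : B, (a, c) ∈ R → (b, d) ∈ R →
      (QuasiCent opA α β a b ↔ QuasiCent opB γ δ c d) := by
  have link : ∀ (k : ℕ) (tm : SigTerm ι ar (k + 1)) (r : Fin k → A × B),
      (∀ l, r l ∈ R) →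
      (MapsInto β α (fun x => tm.eval opA (Fin.cons x fun l => (r l).1)) ↔
        MapsInto δ γ (fun y => tm.eval opB (Fin.cons y fun l => (r l).2))) := by
    intro k tm r hr
    constructor
    · intro h
      by_contra h'
      exact hsep₂ ⟨k, tm, r, hr, h', h⟩
    · intro h
      by_contra h'
      exact hsep₁ ⟨k, tm, r, hr, h', h⟩
  intro a b c d hac hbd
  constructor
  · intro hq k tm i cv dv hci hdi hagree
    choose e he using fun j => hRsd₂ (cv j)
    set r1 : Fin k → A × B := fun j => if j = i then (a, c) else (e j, cv j) with hr1
    set r2 : Fin k → A × B := fun j => if j = i then (b, d) else (e j, cv j) with hr2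
    have h1 : ∀ l, r1 l ∈ R := by
      intro l; simp only [hr1]; split
      · exact hac
      · exact he l
    have h2 : ∀ l, r2 l ∈ R := by
      intro l; simp only [hr2]; split
      · exact hbd
      · exact he l
    have e1 : (fun l => (r1 l).2) = cv := by
      funext j; simp only [hr1]; split
      · rename_i h; rw [h, hci]
      · rfl
    have e2 : (fun l => (r2 l).2) = dv := by
      funext j; simp only [hr2]; split
      · rename_i h; rw [h, hdi]
      · rename_i h; exact hagree j h
    have l1 := link k tm r1 h1
    have l2 := link k tm r2 h2
    rw [e1] at l1
    rw [e2] at l2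
    have hm := hq k tm i (fun l => (r1 l).1) (fun l => (r2 l).1)
      (by simp [hr1]) (by simp [hr2])
      (by intro j hj; simp only [hr1, hr2]; rw [if_neg hj, if_neg hj])
    exact l1.symm.trans (hm.trans l2)
  · intro hq k tm i av bv hai hbi hagree
    choose e he using fun j => hRsd₁ (av j)
    set r1 : Fin k → A × B := fun j => if j = i then (a, c) else (av j, e j) with hr1
    set r2 : Fin k → A × B := fun j => if j = i then (b, d) else (av j, e j) with hr2
    have h1 : ∀ l, r1 l ∈ R := by
      intro l; simp only [hr1]; split
      · exact hac
      · exact he l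
    have h2 : ∀ l, r2 l ∈ R := by
      intro l; simp only [hr2]; split
      · exact hbd
      · exact he l
    have e1 : (fun l => (r1 l).1) = av := by
      funext j; simp only [hr1]; split
      · rename_i h; rw [h, hai]
      · rfl
    have e2 : (fun l => (r2 l).1) = bv := by
      funext j; simp only [hr2]; split
      · rename_i h; rw [h, hbi]
      · rename_i h; exact hagree j h
    have l1 := link k tm r1 h1
    have l2 := link k tm r2 h2
    rw [e1] at l1
    rw [e2] at l2
    have hm := hq k tm i (fun l => (r1 l).2) (fun l => (r2 l).2)
      (by simp [hr1]) (by simp [hr2])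
      (by intro j hj; simp only [hr1, hr2]; rw [if_neg hj, if_neg hj])
    exact l1.trans (hm.trans l2.symm)

end
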